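/- Let R be a non-empty left head variable free ATRS with dc_R(n) ∈ O(n^k). Then the derivational complexity of the relative system R_η↓ / U(R) is also in O(n^k); more precisely dc_{R_η↓/U}(n) ≤ dc_R(2n) for all n. -/

import Mathlib

/-- First-order terms over a signature `F` with arity function `ar` and variables `V`. -/
inductive Term (F : Type) (ar : F → ℕ) (V : Type) : Type where
  | var : V → Term F ar V
  | app : (f : F) → (Fin (ar f) → Term F ar V) → Term F ar V

namespace Term

variable {F V : Type} {ar : F → ℕ}

/-- Application of a substitution. -/
def subst (σ : V → Term F ar V) : Term F ar V → Term F ar V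
  | .var x => σ x
  | .app f ts => .app f (fun i => (ts i).subst σ)

/-- Size of a term. -/
def size : Term F ar V → ℕ
  | .var _ => 1
  | .app _ ts => 1 + ∑ i, (ts i).size

end Term

section Rewriting

variable {F V : Type} {ar : F → ℕ}

/-- The (reflexive) subterm relation: `Subterm u t` means `u` occurs in `t`. -/
inductive Subterm : Term F ar V → Term F ar V → Prop where
  | refl (t) : Subterm t t
  | app (f) (ts : Fin (ar f) → Term F ar V) (i) (u) :
      Subterm u (ts i) → Subterm u (.app f ts)

/-- Proper subterm: `PSub u t` means `u` is a proper subterm of `t`. -/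
def PSub (u t : Term F ar V) : Prop :=
  ∃ (f : F) (ts : Fin (ar f) → Term F ar V) (i : Fin (ar f)),
    t = Term.app f ts ∧ Subterm u (ts i)

/-- One-step rewrite relation of a TRS `R`: closure of the rules under
contexts and substitutions. -/
inductive Rew (R : Set (Term F ar V × Term F ar V)) : Term F ar V → Term F ar V → Prop where
  | rule (l r : Term F ar V) (σ : V → Term F ar V) :
      (l, r) ∈ R → Rew R (l.subst σ) (r.subst σ)
  | congr (f : F) (ts : Fin (ar f) → Term F ar V) (i : Fin (ar f)) (u : Term F ar V) :
      Rew R (ts i) u → Rew R (.app f ts) (.app f (Function.update ts i u))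

/-- Many-step rewriting. -/
def RStar (R : Set (Term F ar V × Term F ar V)) : Term F ar V → Term F ar V → Prop :=
  Relation.ReflTransGen (Rew R)

/-- Normal forms. -/
def NF (R : Set (Term F ar V × Term F ar V)) (t : Term F ar V) : Prop := ∀ u, ¬ Rew R t u

/-- `t` rewrites to the normal form `u` (w.r.t. `R`). -/
def NormTo (R : Set (Term F ar V × Term F ar V)) (t u : Term F ar V) : Prop :=
  RStar R t u ∧ NF R u

/-- Termination: the rewrite relation is well-founded. -/
def Terminating (R : Set (Term F ar V × Term F ar V)) : Prop :=
  WellFounded (fun t s => Rew R s t)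

/-- Confluence. -/
def Confluent (R : Set (Term F ar V × Term F ar V)) : Prop :=
  ∀ s t u, RStar R s t → RStar R s u → ∃ v, RStar R t v ∧ RStar R u v

/-- Innermost one-step rewriting: the contracted redex has only normal
proper subterms. -/
inductive IRew (R : Set (Term F ar V × Term F ar V)) : Term F ar V → Term F ar V → Prop where
  | rule (l r : Term F ar V) (σ : V → Term F ar V) :
      (l, r) ∈ R → (∀ u, PSub u (l.subst σ) → NF R u) →
      IRew R (l.subst σ) (r.subst σ)
  | congr (f : F) (ts : Fin (ar f) → Term F ar V) (i : Fin (ar f)) (u : Term F ar V) :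
      IRew R (ts i) u → IRew R (.app f ts) (.app f (Function.update ts i u))

/-- Innermost termination. -/
def ITerminating (R : Set (Term F ar V × Term F ar V)) : Prop :=
  WellFounded (fun t s => IRew R s t)

/-- `m`-fold composition of a relation. -/
def RelPow (r : α → α → Prop) : ℕ → α → α → Prop
  | 0 => Eq
  | n + 1 => fun a c => ∃ b, r a b ∧ RelPow r n b c

/-- Derivation height of `t` w.r.t. a relation. -/
noncomputable def dh (r : α → α → Prop) (t : α) : ℕ :=
  sSup { m | ∃ u, RelPow r m t u }

/-- Derivational complexity w.r.t. a relation, restricted to starting terms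
satisfying `P`. -/
noncomputable def dcOn {F V : Type} {ar : F → ℕ}
    (r : Term F ar V → Term F ar V → Prop) (P : Term F ar V → Prop) (n : ℕ) : ℕ :=
  sSup { m | ∃ t, P t ∧ t.size ≤ n ∧ m = dh r t }

/-- `f ∈ O(g)`. -/
def BigO (f g : ℕ → ℕ) : Prop := ∃ M N : ℕ, ∀ n, f n ≤ M * g n + N

end Rewriting
section ATRS

/-- Signature for (un)curried applicative systems: `none` is the binary
application symbol `∘`, and `some (c, i)` is the symbol `c_i` of arity `i`
(with `c_0 = c` an applicative constant). -/
abbrev USig (C : Type) := Option (C × ℕ)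

/-- Arity function for `USig`. -/
def uar {C : Type} : USig C → ℕ
  | none => 2
  | some (_, i) => i

/-- Terms over the signature `USig C` (variables are natural numbers). -/
abbrev ATerm (C : Type) := Term (USig C) uar ℕ

variable {C : Type}

/-- Binary application `s ∘ t`. -/
def appT (s t : ATerm C) : ATerm C :=
  .app none (fun i => if i.1 = 0 then s else t)

/-- The applicative constant `c` (i.e. `c_0`). -/
def constT (c : C) : ATerm C :=
  .app (some (c, 0)) (fun i => (Nat.not_lt_zero _ i.isLt).elim)

/-- Symbols of a purely applicative term: only `∘` and constants `c_0`. -/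
def ApplicativeSym : USig C → Prop
  | none => True
  | some (_, i) => i = 0

/-- A term over the applicative signature (constants plus `∘`). -/
def ApplicativeT (t : ATerm C) : Prop :=
  ∀ (u : ATerm C) (f : USig C) (ts : Fin (uar f) → ATerm C),
    Subterm u t → u = Term.app f ts → ApplicativeSym f

/-- `headCount t = some (c, n)` iff `t = c ∘ t₁ ∘ ⋯ ∘ tₙ` for some terms `tᵢ`. -/
def headCount : ATerm C → Option (C × ℕ)
  | .var _ => none
  | .app none ts => (headCount (ts ⟨0, by simp [uar]⟩)).map (fun p => (p.1, p.2 + 1))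
  | .app (some (_, _ + 1)) _ => none
  | .app (some (c, 0)) _ => some (c, 0)

/-- The spine `c ∘ t₁ ∘ ⋯ ∘ tₙ` occurs as a subterm of a left- or
right-hand side of `R`. -/
def SpineIn (R : Set (ATerm C × ATerm C)) (c : C) (n : ℕ) : Prop :=
  ∃ p ∈ R, ∃ t : ATerm C, (Subterm t p.1 ∨ Subterm t p.2) ∧ headCount t = some (c, n)

/-- `aa` is the applicative-arity function of `R`: `aa c` is the maximal `n`
such that `c ∘ t₁ ∘ ⋯ ∘ tₙ` occurs in a rule of `R` (and `0` if `c` does not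
occur applied). -/
def AASpec (R : Set (ATerm C × ATerm C)) (aa : C → ℕ) : Prop :=
  ∀ c : C, (∀ n, SpineIn R c n → n ≤ aa c) ∧ (aa c = 0 ∨ SpineIn R c (aa c))

/-- A term is head variable free if no subterm is of the form `x ∘ v` with
`x` a variable. -/
def HeadVarFree (t : ATerm C) : Prop :=
  ∀ u : ATerm C, Subterm u t → ∀ (x : ℕ) (v : ATerm C), u ≠ appT (.var x) v

/-- Basic well-formedness of an applicative TRS: left-hand sides are not
variables, right-hand side variables occur on the left, and both sides are
applicative terms. -/
def IsATRS (R : Set (ATerm C × ATerm C)) : Prop :=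
  ∀ p ∈ R, (∀ x : ℕ, p.1 ≠ Term.var x) ∧
    (∀ x : ℕ, Subterm (.var x) p.2 → Subterm (.var x) p.1) ∧
    ApplicativeT p.1 ∧ ApplicativeT p.2

/-- `R` is left head variable free. -/
def LHVF (R : Set (ATerm C × ATerm C)) : Prop := ∀ p ∈ R, HeadVarFree p.1

/-- The variables `x_0, …, x_{i-1}`. -/
def uvars (i : ℕ) : Fin i → ATerm C := fun j => .var j.1

/-- The term `f_i(x_0,…,x_{i-1})`. -/
def fiT (c : C) (i : ℕ) : ATerm C := .app (some (c, i)) (fun j => .var j.1)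

/-- The uncurrying system `U`, with rules
`c_i(x_1,…,x_i) ∘ y → c_{i+1}(x_1,…,x_i,y)` for all `0 ≤ i < aa c`. -/
def USys (aa : C → ℕ) : Set (ATerm C × ATerm C) :=
  { p | ∃ (c : C) (i : ℕ), i < aa c ∧
      p = (appT (fiT c i) (.var i), fiT c (i + 1)) }

/-- The currying system `C(F)` (for a signature with arities `arF`), with
rules `f_{i+1}(x_1,…,x_i,y) → f_i(x_1,…,x_i) ∘ y` for all `0 ≤ i < arF f`
(where `f_{arF f}` plays the role of `f`). -/
def CurrySys {F : Type} (arF : F → ℕ) : Set (ATerm F × ATerm F) :=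
  { p | ∃ (f : F) (i : ℕ), i < arF f ∧
      p = (fiT f (i + 1), appT (fiT f i) (.var i)) }

/-- The η-saturation `R_η` of `R` (w.r.t. applicative arities `aa`). -/
inductive Eta (aa : C → ℕ) (R : Set (ATerm C × ATerm C)) : ATerm C × ATerm C → Prop where
  | base (p) : p ∈ R → Eta aa R p
  | eta (l r : ATerm C) (c : C) (n x : ℕ) :
      Eta aa R (l, r) → headCount l = some (c, n) → n < aa c →
      ¬ Subterm (.var x) l → ¬ Subterm (.var x) r →
      Eta aa R (appT l (.var x), appT r (.var x))

/-- The uncurried system `R_η↓`: the rules of `R_η` with both sides in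
`U`-normal form. -/
def EtaDown (aa : C → ℕ) (R : Set (ATerm C × ATerm C)) : Set (ATerm C × ATerm C) :=
  { p | ∃ l r : ATerm C, Eta aa R (l, r) ∧
      NormTo (USys aa) l p.1 ∧ NormTo (USys aa) r p.2 }

/-- The transformed system `U↓(R) = R_η↓ ∪ U(R)`. -/
def UD (aa : C → ℕ) (R : Set (ATerm C × ATerm C)) : Set (ATerm C × ATerm C) :=
  EtaDown aa R ∪ USys aa

/-- Symbols of the signature of `U↓(R)`: `∘` and `c_i` with `i ≤ aa c`. -/
def GoodSym (aa : C → ℕ) : USig C → Prop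
  | none => True
  | some (c, i) => i ≤ aa c

/-- A term over the signature of `U↓(R)`. -/
def GoodTerm (aa : C → ℕ) (t : ATerm C) : Prop :=
  ∀ (u : ATerm C) (f : USig C) (ts : Fin (uar f) → ATerm C),
    Subterm u t → u = Term.app f ts → GoodSym aa f

/-- `C'`: curry a term over the signature of `U↓(R)` and identify all
symbols `c_i` originating from the same constant `c`. -/
def curryId : ATerm C → ATerm C
  | .var x => .var x
  | .app none ts => appT (curryId (ts ⟨0, by simp [uar]⟩)) (curryId (ts ⟨1, by simp [uar]⟩))
  | .app (some (c, i)) ts =>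
      (List.ofFn (fun j : Fin (uar (some (c, i))) => curryId (ts j))).foldl appT (constT c)

end ATRS

/-- The rewrite relation `→_{R/S} = →*_S · →_R · →*_S` of a relative TRS. -/
def RelStep {F V : Type} {ar : F → ℕ} (R S : Set (Term F ar V × Term F ar V)) :
    Term F ar V → Term F ar V → Prop :=
  fun s t => ∃ a b, RStar S s a ∧ Rew R a b ∧ RStar S b t


/-!
Let `C'` curry a term and identify every `c_i` with `c`. It erases `U`-steps, sends
`R_η↓`-steps to `R`-steps and less than doubles the size, so every relative derivation from `t`
projects to an `R`-derivation from `C'(t)` of the same length. Conversely an `R`-step `s → t`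
gives a relative step `s↓ → t↓` between `U`-normal forms: a redex whose head is not saturated is
matched by an η-expanded rule, and the arguments beyond saturation stay outside the redex. As
`t →*_U t↓` and `C'(t)↓ = t↓`, this gives `dh_{R_η↓/U}(t) = dh_R(C'(t))`.

Derivation heights are suprema in `ℕ`, which are `0` for unbounded sets, so comparing the suprema
defining `dc` needs the heights of applicative terms of size `≤ n` to be bounded. Renaming
variables and the constants that do not occur in `R` preserves heights, and up to renaming there
are only finitely many such terms.
-/

theorem List.ofFn_update {α : Type*} {k : ℕ} (f : Fin k → α) (i : Fin k) (v : α) :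
    List.ofFn (Function.update f i v) = (List.ofFn f).set i v := by
  apply List.ext_getElem
  · simp
  · intro j hj _
    simp only [List.getElem_ofFn, List.getElem_set]
    by_cases hij : (i : ℕ) = j
    · rw [if_pos hij, show (⟨j, by simpa using hj⟩ : Fin k) = i from Fin.ext hij.symm,
        Function.update_self]
    · rw [if_neg hij, Function.update_of_ne fun h => hij (by rw [← h])]

theorem List.findIdx_eq_lt_length_of_mem {α : Type*} [DecidableEq α] {a : α} {L : List α}
    (h : a ∈ L) : L.findIdx (· = a) < L.length :=
  List.findIdx_lt_length_of_exists ⟨a, h, by simp⟩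

theorem List.getElem?_findIdx_eq {α : Type*} [DecidableEq α] {a : α} {L : List α} (h : a ∈ L) :
    L[L.findIdx (· = a)]? = some a := by
  rw [List.getElem?_eq_getElem (List.findIdx_eq_lt_length_of_mem h)]
  simpa using List.findIdx_getElem (w := List.findIdx_eq_lt_length_of_mem h)

namespace Term

variable {F V : Type} {ar : F → ℕ}

theorem size_pos (t : Term F ar V) : 0 < t.size := by
  cases t <;> simp [size]

@[simp]
theorem subst_var (σ : V → Term F ar V) (x : V) : (Term.var x : Term F ar V).subst σ = σ x := rfl

@[simp]
theorem subst_app (σ : V → Term F ar V) (f : F) (ts : Fin (ar f) → Term F ar V) :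
    (Term.app f ts).subst σ = .app f (fun i => (ts i).subst σ) := rfl

theorem subst_subst (t : Term F ar V) (σ τ : V → Term F ar V) :
    (t.subst σ).subst τ = t.subst (fun x => (σ x).subst τ) := by
  induction t with
  | var x => rfl
  | app f ts ih => simp only [subst_app, ih]

theorem subst_congr {t : Term F ar V} {σ τ : V → Term F ar V}
    (h : ∀ x, Subterm (.var x) t → σ x = τ x) : t.subst σ = t.subst τ := by
  induction t with
  | var x => exact h x (.refl _)
  | app f ts ih =>
      simp only [subst_app]
      congr 1
      funext i
      exact ih i fun y hy => h y (.app f ts i _ hy)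

end Term

namespace Subterm

variable {F V : Type} {ar : F → ℕ}

theorem arg (f : F) (ts : Fin (ar f) → Term F ar V) (i : Fin (ar f)) :
    Subterm (ts i) (.app f ts) :=
  .app f ts i _ (.refl _)

theorem trans {a b c : Term F ar V} (hab : Subterm a b) (hbc : Subterm b c) : Subterm a c := by
  induction hbc with
  | refl => exact hab
  | app f ts i u _ ih => exact .app f ts i a (ih hab)

theorem eq_of_var {u : Term F ar V} {x : V} (h : Subterm u (.var x)) : u = .var x := by
  cases h; rfl

theorem eq_or_arg {u : Term F ar V} {f : F} {ts : Fin (ar f) → Term F ar V}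
    (h : Subterm u (.app f ts)) : u = .app f ts ∨ ∃ i, Subterm u (ts i) := by
  cases h with
  | refl => exact Or.inl rfl
  | app f ts i u h => exact Or.inr ⟨i, h⟩

end Subterm

theorem exists_var_bound {F : Type} {ar : F → ℕ} (t : Term F ar ℕ) :
    ∃ N, ∀ x, Subterm (.var x) t → x < N := by
  induction t with
  | var y => exact ⟨y + 1, fun x h => by cases h; omega⟩
  | app f ts ih =>
      choose N hN using ih
      refine ⟨∑ i, N i, fun x h => ?_⟩
      rcases h.eq_or_arg with h | ⟨i, hi⟩
      · cases h
      · exact (hN i x hi).trans_le (Finset.single_le_sum (by simp) (Finset.mem_univ i))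

theorem exists_fresh_var {F : Type} {ar : F → ℕ} (s t : Term F ar ℕ) :
    ∃ x, ¬ Subterm (.var x) s ∧ ¬ Subterm (.var x) t := by
  obtain ⟨M, hM⟩ := exists_var_bound s
  obtain ⟨N, hN⟩ := exists_var_bound t
  exact ⟨max M N, fun h => by have := hM _ h; omega, fun h => by have := hN _ h; omega⟩

section DerivationHeight

variable {α β : Type*}

theorem RelPow.map {r : α → α → Prop} {s : β → β → Prop} (f : α → β)
    (hf : ∀ a b, r a b → s (f a) (f b)) :
    ∀ {m : ℕ} {a b : α}, RelPow r m a b → RelPow s m (f a) (f b)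
  | 0, _, _, h => congrArg f h
  | _ + 1, _, _, ⟨c, hac, hcb⟩ => ⟨f c, hf _ _ hac, RelPow.map f hf hcb⟩

theorem dh_congr {r : α → α → Prop} {s : β → β → Prop} {a : α} {b : β}
    (h : ∀ m, (∃ u, RelPow r m a u) ↔ ∃ v, RelPow s m b v) : dh r a = dh s b := by
  unfold dh
  congr 1
  ext m
  exact h m

end DerivationHeight

section Closure

variable {F V : Type} {ar : F → ℕ} {R S : Set (Term F ar V × Term F ar V)}

theorem Rew.subst {s t : Term F ar V} (h : Rew R s t) (τ : V → Term F ar V) :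
    Rew R (s.subst τ) (t.subst τ) := by
  induction h with
  | rule l r σ hm =>
      rw [Term.subst_subst, Term.subst_subst]
      exact .rule l r _ hm
  | congr f ts i u _ ih =>
      simp only [Term.subst_app]
      rw [← Function.comp_def (Term.subst τ) (Function.update ts i u), Function.comp_update]
      exact .congr f _ i _ ih

theorem RStar.subst {s t : Term F ar V} (h : RStar R s t) (τ : V → Term F ar V) :
    RStar R (s.subst τ) (t.subst τ) :=
  Relation.ReflTransGen.lift (Term.subst τ) (fun _ _ h => Rew.subst h τ) s t h

theorem RStar.update {f : F} {ts : Fin (ar f) → Term F ar V} {i : Fin (ar f)}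
    {u : Term F ar V} (h : RStar R (ts i) u) :
    RStar R (.app f ts) (.app f (Function.update ts i u)) := by
  induction h with
  | refl => rw [Function.update_eq_self]; exact .refl
  | tail _ hbc ih =>
      refine ih.tail ?_
      have := Rew.congr f (Function.update ts i _) i _ (by rwa [Function.update_self])
      rwa [Function.update_idem] at this

theorem RStar.app {f : F} {ts us : Fin (ar f) → Term F ar V}
    (h : ∀ i, RStar R (ts i) (us i)) : RStar R (.app f ts) (.app f us) := by
  -- rewrite the arguments one position at a time, from the last one down
  suffices key : ∀ (m : ℕ) (ts : Fin (ar f) → Term F ar V), (∀ i, RStar R (ts i) (us i)) →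
      (∀ i : Fin (ar f), m ≤ i → ts i = us i) → RStar R (.app f ts) (.app f us) from
    key (ar f) ts h fun i hi => absurd i.isLt (by omega)
  intro m
  induction m with
  | zero =>
      intro ts _ heq
      rw [funext fun i => heq i (Nat.zero_le _)]
      exact .refl
  | succ m ih =>
      intro ts hts heq
      by_cases hm : m < ar f
      · refine (RStar.update (hts ⟨m, hm⟩)).trans (ih _ (fun i => ?_) fun i hi => ?_)
        · by_cases hi : i = ⟨m, hm⟩
          · subst hi; rw [Function.update_self]; exact .refl
          · rw [Function.update_of_ne hi]; exact hts i
        · by_cases hi' : i = ⟨m, hm⟩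
          · subst hi'; rw [Function.update_self]
          · rw [Function.update_of_ne hi']
            exact heq i (by have : (i : ℕ) ≠ m := fun h => hi' (Fin.ext h); omega)
      · exact ih ts hts fun i _ => heq i (by omega)

theorem RStar.subst_of_forall {σ τ : V → Term F ar V} (h : ∀ x, RStar R (σ x) (τ x))
    (t : Term F ar V) : RStar R (t.subst σ) (t.subst τ) := by
  induction t with
  | var x => exact h x
  | app f ts ih => exact RStar.app ih

theorem RelStep.update {f : F} {ts : Fin (ar f) → Term F ar V} {i : Fin (ar f)}
    {u : Term F ar V} (h : RelStep R S (ts i) u) :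
    RelStep R S (.app f ts) (.app f (Function.update ts i u)) := by
  obtain ⟨a, b, hsa, hab, hbu⟩ := h
  refine ⟨.app f (Function.update ts i a), .app f (Function.update ts i b), RStar.update hsa,
    ?_, ?_⟩
  · have := Rew.congr f (Function.update ts i a) i b (by rwa [Function.update_self])
    rwa [Function.update_idem] at this
  · have := RStar.update (f := f) (ts := Function.update ts i b) (i := i)
      (by rwa [Function.update_self])
    rwa [Function.update_idem] at this

theorem RelStep.of_rstar_left {s s' t : Term F ar V} (hs : RStar S s s')
    (h : RelStep R S s' t) : RelStep R S s t :=
  let ⟨a, b, hsa, hab, hbt⟩ := h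
  ⟨a, b, hs.trans hsa, hab, hbt⟩

theorem RelPow.relStep_of_rstar_left {s s' t : Term F ar V} (hs : RStar S s s') :
    ∀ {m : ℕ}, RelPow (RelStep R S) m s' t → ∃ t', RelPow (RelStep R S) m s t'
  | 0, _ => ⟨s, rfl⟩
  | _ + 1, ⟨c, hc, hct⟩ => ⟨t, c, hc.of_rstar_left hs, hct⟩

end Closure

section Applicative

variable {C : Type}

theorem uar_none_cases (i : Fin (uar (none : USig C))) :
    i = ⟨0, by simp [uar]⟩ ∨ i = ⟨1, by simp [uar]⟩ := by
  rcases i with ⟨_ | _ | _, hi⟩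
  · exact Or.inl rfl
  · exact Or.inr rfl
  · exact absurd hi (by simp [uar])

theorem app_none_eq_appT (ts : Fin (uar (none : USig C)) → ATerm C) :
    Term.app none ts = appT (ts ⟨0, by simp [uar]⟩) (ts ⟨1, by simp [uar]⟩) := by
  unfold appT
  congr 1
  funext i
  rcases uar_none_cases i with rfl | rfl <;> simp

theorem appT_inj {a b a' b' : ATerm C} (h : appT a b = appT a' b') : a = a' ∧ b = b' := by
  unfold appT at h
  injection h with _ h
  exact ⟨by simpa using congrFun h ⟨0, by simp [uar]⟩, by simpa using congrFun h ⟨1, by simp [uar]⟩⟩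

theorem appT_ne_var (a b : ATerm C) (x : ℕ) : appT a b ≠ .var x := by
  simp [appT]

theorem constT_eq {c : C} (ts : Fin (uar (some (c, 0))) → ATerm C) :
    Term.app (some (c, 0)) ts = constT c := by
  unfold constT
  congr 1
  funext i
  exact absurd i.isLt (by simp [uar])

theorem subst_appT (a b : ATerm C) (σ : ℕ → ATerm C) :
    (appT a b).subst σ = appT (a.subst σ) (b.subst σ) := by
  unfold appT
  simp only [Term.subst_app]
  congr 1
  funext i
  rcases uar_none_cases i with rfl | rfl <;> simp

theorem subst_constT (c : C) (σ : ℕ → ATerm C) : (constT c).subst σ = constT c :=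
  constT_eq _

theorem subst_fiT (c : C) (i : ℕ) (σ : ℕ → ATerm C) :
    (fiT c i).subst σ = Term.app (some (c, i)) (fun j => σ j.1) := rfl

theorem subst_foldl_appT (L : List (ATerm C)) (z : ATerm C) (σ : ℕ → ATerm C) :
    (L.foldl appT z).subst σ = (L.map (Term.subst σ)).foldl appT (z.subst σ) := by
  induction L generalizing z with
  | nil => rfl
  | cons a L ih => simp only [List.foldl, List.map, ih, subst_appT]

theorem size_app_none (ts : Fin (uar (none : USig C)) → ATerm C) :
    (Term.app none ts).size = 1 + (ts ⟨0, by simp [uar]⟩).size + (ts ⟨1, by simp [uar]⟩).size := by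
  change 1 + ∑ i : Fin 2, (ts i).size = _
  rw [Fin.sum_univ_two, add_assoc]
  rfl

theorem size_appT (a b : ATerm C) : (appT a b).size = 1 + a.size + b.size := by
  rw [appT, size_app_none]
  simp

theorem size_constT (c : C) : (constT c).size = 1 := by
  simp [constT, Term.size, uar]

theorem size_foldl_appT (L : List (ATerm C)) (z : ATerm C) :
    (L.foldl appT z).size = z.size + (L.map (fun u => 1 + u.size)).sum := by
  induction L generalizing z with
  | nil => simp
  | cons a L ih => simp [List.foldl, ih, size_appT]; omega

theorem appT_left_of_update {P Q : ATerm C → ATerm C → Prop}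
    (hPQ : ∀ (ts : Fin (uar (none : USig C)) → ATerm C) i u,
      P (ts i) u → Q (.app none ts) (.app none (Function.update ts i u)))
    {a a' : ATerm C} (b : ATerm C) (h : P a a') : Q (appT a b) (appT a' b) := by
  have := hPQ (fun i => if i.1 = 0 then a else b) ⟨0, by simp [uar]⟩ a' (by simpa using h)
  unfold appT
  convert this using 2
  funext i
  rcases uar_none_cases i with rfl | rfl <;> simp [Function.update, Fin.ext_iff]

theorem appT_right_of_update {P Q : ATerm C → ATerm C → Prop}
    (hPQ : ∀ (ts : Fin (uar (none : USig C)) → ATerm C) i u,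
      P (ts i) u → Q (.app none ts) (.app none (Function.update ts i u)))
    (a : ATerm C) {b b' : ATerm C} (h : P b b') : Q (appT a b) (appT a b') := by
  have := hPQ (fun i => if i.1 = 0 then a else b) ⟨1, by simp [uar]⟩ b' (by simpa using h)
  unfold appT
  convert this using 2
  funext i
  rcases uar_none_cases i with rfl | rfl <;> simp [Function.update, Fin.ext_iff]

variable {X : Set (ATerm C × ATerm C)}

theorem Rew.appT_left {a a' : ATerm C} (b : ATerm C) (h : Rew X a a') :
    Rew X (appT a b) (appT a' b) :=
  appT_left_of_update (Rew.congr none) b h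

theorem Rew.appT_right (a : ATerm C) {b b' : ATerm C} (h : Rew X b b') :
    Rew X (appT a b) (appT a b') :=
  appT_right_of_update (Rew.congr none) a h

theorem RStar.appT_congr {a a' b b' : ATerm C} (ha : RStar X a a') (hb : RStar X b b') :
    RStar X (appT a b) (appT a' b') :=
  (appT_left_of_update (fun _ _ _ => RStar.update) b ha).trans
    (appT_right_of_update (fun _ _ _ => RStar.update) a' hb)

theorem Rew.foldl_appT {z z' : ATerm C} (L : List (ATerm C)) (h : Rew X z z') :
    Rew X (L.foldl appT z) (L.foldl appT z') := by
  induction L generalizing z z' with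
  | nil => exact h
  | cons a L ih => exact ih (h.appT_left a)

theorem RStar.foldl_appT {z z' : ATerm C} {L L' : List (ATerm C)} (h : RStar X z z')
    (hL : List.Forall₂ (RStar X) L L') : RStar X (L.foldl appT z) (L'.foldl appT z') := by
  induction hL generalizing z z' with
  | nil => exact h
  | cons hv _ ih => exact ih (h.appT_congr hv)

theorem applicativeT_of_subterm {t u : ATerm C} (h : ApplicativeT t) (hu : Subterm u t) :
    ApplicativeT u :=
  fun v f ts hv he => h v f ts (hv.trans hu) he

theorem applicativeT_arg {f : USig C} {ts : Fin (uar f) → ATerm C}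
    (h : ApplicativeT (Term.app f ts)) (i : Fin (uar f)) : ApplicativeT (ts i) :=
  applicativeT_of_subterm h (.arg f ts i)

theorem applicativeT_var (x : ℕ) : ApplicativeT (.var x : ATerm C) := by
  intro u f ts hu he
  rw [hu.eq_of_var] at he
  cases he

theorem applicativeT_appT {a b : ATerm C} (ha : ApplicativeT a) (hb : ApplicativeT b) :
    ApplicativeT (appT a b) := by
  intro u f ts hu he
  rcases Subterm.eq_or_arg hu with rfl | ⟨i, hi⟩
  · injection he with hf
    subst hf
    trivial
  · rcases uar_none_cases i with rfl | rfl
    · exact ha u f ts (by simpa using hi) he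
    · exact hb u f ts (by simpa using hi) he

theorem applicativeT_constT (c : C) : ApplicativeT (constT c) := by
  intro u f ts hu he
  rcases Subterm.eq_or_arg hu with rfl | ⟨i, _⟩
  · injection he with hf
    subst hf
    rfl
  · exact absurd i.isLt (by simp [uar])

theorem applicativeT_foldl_appT {L : List (ATerm C)} {z : ATerm C} (hz : ApplicativeT z)
    (hL : ∀ u ∈ L, ApplicativeT u) : ApplicativeT (L.foldl appT z) := by
  induction L generalizing z with
  | nil => exact hz
  | cons a L ih =>
      exact ih (applicativeT_appT hz (hL a (by simp))) fun u hu => hL u (by simp [hu])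

theorem ApplicativeT.arity_eq_zero {c : C} {i : ℕ} {ts : Fin (uar (some (c, i))) → ATerm C}
    (h : ApplicativeT (Term.app (some (c, i)) ts)) : i = 0 :=
  h _ _ ts (.refl _) rfl

theorem headVarFree_of_subterm {t u : ATerm C} (h : HeadVarFree t) (hu : Subterm u t) :
    HeadVarFree u :=
  fun v hv => h v (hv.trans hu)

theorem headVarFree_arg {f : USig C} {ts : Fin (uar f) → ATerm C}
    (h : HeadVarFree (Term.app f ts)) (i : Fin (uar f)) : HeadVarFree (ts i) :=
  headVarFree_of_subterm h (.arg f ts i)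

theorem HeadVarFree.head_ne_var {ts : Fin (uar (none : USig C)) → ATerm C}
    (h : HeadVarFree (Term.app none ts)) (x : ℕ) : ts ⟨0, by simp [uar]⟩ ≠ .var x := by
  intro hx
  refine h _ (.refl _) x (ts ⟨1, by simp [uar]⟩) ?_
  rw [app_none_eq_appT ts, hx]

theorem goodTerm_arg {aa : C → ℕ} {f : USig C} {ts : Fin (uar f) → ATerm C}
    (h : GoodTerm aa (Term.app f ts)) (i : Fin (uar f)) : GoodTerm aa (ts i) :=
  fun u g us hu he => h u g us (hu.trans (.arg f ts i)) he

end Applicative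

section Currying

variable {C : Type}

theorem curryId_app_none (ts : Fin (uar (none : USig C)) → ATerm C) :
    curryId (Term.app none ts) =
      appT (curryId (ts ⟨0, by simp [uar]⟩)) (curryId (ts ⟨1, by simp [uar]⟩)) := by
  rw [curryId]

theorem curryId_app_some (c : C) (i : ℕ) (ts : Fin (uar (some (c, i))) → ATerm C) :
    curryId (Term.app (some (c, i)) ts) =
      (List.ofFn fun j => curryId (ts j)).foldl appT (constT c) := by
  rw [curryId]

theorem curryId_appT (a b : ATerm C) : curryId (appT a b) = appT (curryId a) (curryId b) := by
  rw [appT, curryId_app_none]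
  rfl

theorem curryId_subst (t : ATerm C) (σ : ℕ → ATerm C) :
    curryId (t.subst σ) = (curryId t).subst (fun x => curryId (σ x)) := by
  induction t with
  | var x => rfl
  | app f ts ih =>
      obtain _ | ⟨c, i⟩ := f
      · simp only [Term.subst_app, curryId_app_none, subst_appT, ih]
      · simp only [Term.subst_app, curryId_app_some, subst_foldl_appT, subst_constT,
          List.map_ofFn, Function.comp_def, ih]

theorem curryId_subst_fiT (c : C) (i : ℕ) (σ : ℕ → ATerm C) :
    curryId ((fiT c i).subst σ) =
      (List.ofFn fun j : Fin i => curryId (σ j)).foldl appT (constT c) :=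
  curryId_app_some c i _

theorem curryId_eq_self {t : ATerm C} (h : ApplicativeT t) : curryId t = t := by
  induction t with
  | var x => rfl
  | app f ts ih =>
      obtain _ | ⟨c, i⟩ := f
      · rw [curryId_app_none, ih _ (applicativeT_arg h _), ih _ (applicativeT_arg h _),
          app_none_eq_appT]
      · obtain rfl := h.arity_eq_zero
        rw [curryId_app_some, ← constT_eq ts]
        simp [uar]

theorem applicativeT_curryId (t : ATerm C) : ApplicativeT (curryId t) := by
  induction t with
  | var x => exact applicativeT_var x
  | app f ts ih =>
      obtain _ | ⟨c, i⟩ := f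
      · rw [curryId_app_none]
        exact applicativeT_appT (ih _) (ih _)
      · rw [curryId_app_some]
        refine applicativeT_foldl_appT (applicativeT_constT c) fun u hu => ?_
        obtain ⟨j, rfl⟩ := List.mem_ofFn.mp hu
        exact ih j

theorem size_curryId_lt (t : ATerm C) : (curryId t).size < 2 * t.size := by
  induction t with
  | var x => simp [curryId, Term.size]
  | app f ts ih =>
      obtain _ | ⟨c, i⟩ := f
      · rw [curryId_app_none, size_appT, size_app_none]
        have := ih ⟨0, by simp [uar]⟩
        have := ih ⟨1, by simp [uar]⟩
        omega
      · rw [curryId_app_some, size_foldl_appT, size_constT, List.map_ofFn, List.sum_ofFn]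
        -- each argument `t` of `c_i` costs `1 + |C'(t)| ≤ 2|t|` after currying
        have hsum : ∑ j, (1 + (curryId (ts j)).size) ≤ ∑ j, 2 * (ts j).size :=
          Finset.sum_le_sum fun j _ => by have := ih j; omega
        change 1 + ∑ j, (1 + (curryId (ts j)).size) < 2 * (1 + ∑ j, (ts j).size)
        rw [Nat.mul_add, Finset.mul_sum]
        omega

end Currying

section Projection

variable {C : Type} {aa : C → ℕ} {R X : Set (ATerm C × ATerm C)}

theorem curryId_update {f : USig C} {ts : Fin (uar f) → ATerm C} {i : Fin (uar f)}
    {u : ATerm C} (h : curryId u = curryId (ts i)) :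
    curryId (.app f (Function.update ts i u)) = curryId (.app f ts) := by
  have key : ∀ j, curryId (Function.update ts i u j) = curryId (ts j) := by
    intro j
    by_cases hj : j = i
    · subst hj; rw [Function.update_self, h]
    · rw [Function.update_of_ne hj]
  obtain _ | ⟨c, k⟩ := f
  · rw [curryId_app_none, curryId_app_none, key, key]
  · simp only [curryId_app_some, key]

theorem curryId_eq_of_rew_usys {s t : ATerm C} (h : Rew (USys aa) s t) :
    curryId s = curryId t := by
  induction h with
  | rule l r σ hm =>
      obtain ⟨c, i, -, hp⟩ := hm
      obtain ⟨rfl, rfl⟩ := Prod.ext_iff.mp hp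
      rw [subst_appT, curryId_appT, curryId_subst_fiT, curryId_subst_fiT, List.ofFn_succ',
        List.concat_eq_append, List.foldl_concat]
      rfl
  | congr f ts i u _ ih => exact (curryId_update ih.symm).symm

theorem curryId_eq_of_rstar_usys {s t : ATerm C} (h : RStar (USys aa) s t) :
    curryId s = curryId t := by
  induction h with
  | refl => rfl
  | tail _ h ih => exact ih.trans (curryId_eq_of_rew_usys h)

theorem Rew.foldl_appT_set {z : ATerm C} {L : List (ATerm C)} {j : ℕ} (hj : j < L.length)
    {b : ATerm C} (h : Rew X L[j] b) : Rew X (L.foldl appT z) ((L.set j b).foldl appT z) := by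
  induction L generalizing z j with
  | nil => simp at hj
  | cons a L ih =>
      cases j with
      | zero => exact Rew.foldl_appT L (Rew.appT_right z (by simpa using h))
      | succ j => exact ih (by simpa using hj) (by simpa using h)

theorem Rew.curryId_update {f : USig C} {ts : Fin (uar f) → ATerm C} {i : Fin (uar f)}
    {u : ATerm C} (h : Rew R (curryId (ts i)) (curryId u)) :
    Rew R (curryId (.app f ts)) (curryId (.app f (Function.update ts i u))) := by
  obtain _ | ⟨c, k⟩ := f
  · rw [curryId_app_none, curryId_app_none]
    rcases uar_none_cases i with rfl | rfl
    · simpa [Function.update, Fin.ext_iff] using h.appT_left _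
    · simpa [Function.update, Fin.ext_iff] using h.appT_right _
  · rw [curryId_app_some, curryId_app_some, ← Function.comp_def curryId (Function.update ts i u),
      Function.comp_update, List.ofFn_update]
    exact Rew.foldl_appT_set (by simp) (by simpa using h)

/-- `C'` maps a rule of `R_η` to a rule of `R` applied to extra variables. -/
theorem Eta.rew_curryId (hR : IsATRS R) {p : ATerm C × ATerm C} (h : Eta aa R p)
    (τ : ℕ → ATerm C) : Rew R ((curryId p.1).subst τ) ((curryId p.2).subst τ) := by
  induction h with
  | base p hp =>
      rw [curryId_eq_self (hR p hp).2.2.1, curryId_eq_self (hR p hp).2.2.2]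
      exact .rule p.1 p.2 τ hp
  | eta l r c n x _ _ _ _ _ ih =>
      simp only [curryId_appT, subst_appT]
      exact ih.appT_left _

theorem Rew.curryId_of_etaDown (hR : IsATRS R) {s t : ATerm C} (h : Rew (EtaDown aa R) s t) :
    Rew R (curryId s) (curryId t) := by
  induction h with
  | rule l r σ hm =>
      obtain ⟨l₀, r₀, hEta, ⟨hl, -⟩, ⟨hr, -⟩⟩ := hm
      rw [curryId_subst, curryId_subst, ← curryId_eq_of_rstar_usys hl,
        ← curryId_eq_of_rstar_usys hr]
      exact hEta.rew_curryId hR _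
  | congr f ts i u _ ih => exact ih.curryId_update

theorem RelStep.curryId (hR : IsATRS R) {s t : ATerm C}
    (h : RelStep (EtaDown aa R) (USys aa) s t) : Rew R (curryId s) (curryId t) := by
  obtain ⟨a, b, hsa, hab, hbt⟩ := h
  rw [curryId_eq_of_rstar_usys hsa, ← curryId_eq_of_rstar_usys hbt]
  exact hab.curryId_of_etaDown hR

end Projection

section Uncurrying

variable {C : Type}

def snocArgs {c : C} {i : ℕ} (ts : Fin (uar (some (c, i))) → ATerm C) (b : ATerm C) :
    Fin (uar (some (c, i + 1))) → ATerm C :=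
  fun j => if hj : (j : ℕ) < i then ts ⟨j, hj⟩ else b

def uncurryApp (aa : C → ℕ) : ATerm C → ATerm C → ATerm C
  | .app (some (c, i)) ts, b =>
      if i < aa c then .app (some (c, i + 1)) (snocArgs ts b) else appT (.app (some (c, i)) ts) b
  | a, b => appT a b

/-- `t↓`, the `U`-normal form of `t`. -/
def uncurry (aa : C → ℕ) : ATerm C → ATerm C
  | .var x => .var x
  | .app none ts =>
      uncurryApp aa (uncurry aa (ts ⟨0, by simp [uar]⟩)) (uncurry aa (ts ⟨1, by simp [uar]⟩))
  | .app (some p) ts => .app (some p) fun j => uncurry aa (ts j)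

def NoURedex (aa : C → ℕ) (t : ATerm C) : Prop :=
  ∀ (c : C) (i : ℕ) (us : Fin (uar (some (c, i))) → ATerm C) (b : ATerm C),
    Subterm (appT (.app (some (c, i)) us) b) t → aa c ≤ i

variable {aa : C → ℕ}

theorem snocArgs_cases {c : C} {i : ℕ} (ts : Fin (uar (some (c, i))) → ATerm C) (b : ATerm C)
    (j : Fin (uar (some (c, i + 1)))) : snocArgs ts b j = b ∨ ∃ k, snocArgs ts b j = ts k := by
  unfold snocArgs
  split
  · exact Or.inr ⟨_, rfl⟩
  · exact Or.inl rfl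

theorem snocArgs_init_last {c : C} {i : ℕ} (ts : Fin (uar (some (c, i + 1))) → ATerm C) :
    snocArgs (fun j : Fin (uar (some (c, i))) => ts ⟨j, Nat.lt_succ_of_lt j.isLt⟩)
      (ts ⟨i, Nat.lt_succ_self i⟩) = ts := by
  funext j
  unfold snocArgs
  split
  · rfl
  · congr
    have := j.isLt
    simp only [uar] at this
    omega

theorem snocArgs_comp {c : C} {i : ℕ} (g : ATerm C → ATerm C)
    (ts : Fin (uar (some (c, i))) → ATerm C) (b : ATerm C) :
    (fun j => g (snocArgs ts b j)) = snocArgs (fun j => g (ts j)) (g b) := by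
  funext j
  unfold snocArgs
  split <;> rfl

theorem snocArgs_castSucc {c : C} {i : ℕ} (ts : Fin (uar (some (c, i))) → ATerm C) (b : ATerm C)
    (k : Fin (uar (some (c, i)))) : snocArgs ts b ⟨k, Nat.lt_succ_of_lt k.isLt⟩ = ts k := by
  simp [snocArgs, show (k : ℕ) < i from k.isLt]

theorem snocArgs_last {c : C} {i : ℕ} (ts : Fin (uar (some (c, i))) → ATerm C) (b : ATerm C) :
    snocArgs ts b ⟨i, Nat.lt_succ_self i⟩ = b := by
  simp [snocArgs]

theorem snocArgs_update {c : C} {i : ℕ} (ts : Fin (uar (some (c, i))) → ATerm C)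
    (k : Fin (uar (some (c, i)))) (v b : ATerm C) :
    snocArgs (Function.update ts k v) b =
      Function.update (snocArgs ts b) ⟨k, Nat.lt_succ_of_lt k.isLt⟩ v := by
  funext j
  have hk : (k : ℕ) < i := k.isLt
  simp only [snocArgs, Function.update_apply, Fin.ext_iff]
  split_ifs <;> first | rfl | omega

theorem update_snocArgs_last {c : C} {i : ℕ} (ts : Fin (uar (some (c, i))) → ATerm C)
    (b b' : ATerm C) :
    Function.update (snocArgs ts b) ⟨i, Nat.lt_succ_self i⟩ b' = snocArgs ts b' := by
  funext j
  have hj : (j : ℕ) < i + 1 := j.isLt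
  simp only [snocArgs, Function.update_apply, Fin.ext_iff]
  split_ifs <;> first | rfl | omega

theorem uncurryApp_some (c : C) (i : ℕ) (ts : Fin (uar (some (c, i))) → ATerm C) (b : ATerm C) :
    uncurryApp aa (.app (some (c, i)) ts) b =
      if i < aa c then .app (some (c, i + 1)) (snocArgs ts b)
      else appT (.app (some (c, i)) ts) b := rfl

theorem uncurryApp_of_forall_ne {a : ATerm C}
    (h : ∀ c i (ts : Fin (uar (some (c, i))) → ATerm C), a = .app (some (c, i)) ts → aa c ≤ i)
    (b : ATerm C) : uncurryApp aa a b = appT a b := by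
  rcases a with y | ⟨_ | ⟨c, i⟩, ts⟩
  · rfl
  · rfl
  · rw [uncurryApp_some, if_neg (not_lt.mpr (h c i ts rfl))]

theorem uncurryApp_ne_var (a b : ATerm C) (x : ℕ) : uncurryApp aa a b ≠ .var x := by
  rcases a with y | ⟨_ | ⟨c, i⟩, ts⟩
  · exact appT_ne_var _ _ x
  · exact appT_ne_var _ _ x
  · rw [uncurryApp_some]
    split
    · simp
    · exact appT_ne_var _ _ x

theorem uncurry_app_none (ts : Fin (uar (none : USig C)) → ATerm C) :
    uncurry aa (.app none ts) =
      uncurryApp aa (uncurry aa (ts ⟨0, by simp [uar]⟩)) (uncurry aa (ts ⟨1, by simp [uar]⟩)) := by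
  rw [uncurry]

theorem uncurry_app_some (p : C × ℕ) (ts : Fin (uar (some p)) → ATerm C) :
    uncurry aa (.app (some p) ts) = .app (some p) fun j => uncurry aa (ts j) := by
  rw [uncurry]

theorem uncurry_appT (a b : ATerm C) :
    uncurry aa (appT a b) = uncurryApp aa (uncurry aa a) (uncurry aa b) := by
  rw [appT, uncurry_app_none]
  simp

theorem uncurry_ne_var {t : ATerm C} (h : ∀ y, t ≠ .var y) (x : ℕ) : uncurry aa t ≠ .var x := by
  rcases t with y | ⟨_ | p, ts⟩
  · exact absurd rfl (h y)
  · rw [uncurry_app_none]; exact uncurryApp_ne_var _ _ x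
  · rw [uncurry_app_some]; simp

theorem uncurryApp_subst {a : ATerm C} (ha : ∀ x, a ≠ .var x) (b : ATerm C) (σ : ℕ → ATerm C) :
    (uncurryApp aa a b).subst σ = uncurryApp aa (a.subst σ) (b.subst σ) := by
  rcases a with y | ⟨_ | ⟨c, i⟩, ts⟩
  · exact absurd rfl (ha y)
  · exact subst_appT _ _ σ
  · simp only [uncurryApp_some, Term.subst_app]
    split
    · simp only [Term.subst_app, snocArgs_comp]
    · exact subst_appT _ _ σ

theorem uncurry_subst {l : ATerm C} (h : HeadVarFree l) (σ : ℕ → ATerm C) :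
    uncurry aa (l.subst σ) = (uncurry aa l).subst fun x => uncurry aa (σ x) := by
  induction l with
  | var x => rfl
  | app f ts ih =>
      obtain _ | p := f
      · simp only [Term.subst_app, uncurry_app_none]
        rw [ih _ (headVarFree_arg h _), ih _ (headVarFree_arg h _),
          uncurryApp_subst (uncurry_ne_var h.head_ne_var)]
      · simp only [Term.subst_app, uncurry_app_some]
        congr 1
        funext j
        exact ih j (headVarFree_arg h j)

theorem rstar_appT_uncurryApp (a b : ATerm C) :
    RStar (USys aa) (appT a b) (uncurryApp aa a b) := by
  rcases a with y | ⟨_ | ⟨c, i⟩, ts⟩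
  · exact .refl
  · exact .refl
  · rw [uncurryApp_some]
    split
    · rename_i hi
      -- the `U`-rule for `c_i`, instantiated by `x_j ↦ tsⱼ` and `x_i ↦ b`
      have := Rew.rule (R := USys aa) _ _ (fun k => if hk : k < i then ts ⟨k, hk⟩ else b)
        ⟨c, i, hi, rfl⟩
      rw [subst_appT, subst_fiT, subst_fiT] at this
      refine .single ?_
      convert this using 3
      · funext j
        have hj : (j : ℕ) < i := j.isLt
        simp [hj]
      · simp
      · rfl
    · exact .refl

theorem rstar_uncurry (t : ATerm C) : RStar (USys aa) t (uncurry aa t) := by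
  induction t with
  | var x => exact .refl
  | app f ts ih =>
      obtain _ | p := f
      · rw [uncurry_app_none]
        refine (RStar.app ih).trans ?_
        rw [app_none_eq_appT fun i => uncurry aa (ts i)]
        exact rstar_appT_uncurryApp _ _
      · rw [uncurry_app_some]
        exact RStar.app ih

theorem noURedex_of_subterm {t u : ATerm C} (h : NoURedex aa t) (hu : Subterm u t) :
    NoURedex aa u :=
  fun c i us b hs => h c i us b (hs.trans hu)

theorem NoURedex.nf {t : ATerm C} (h : NoURedex aa t) : NF (USys aa) t := by
  intro u hu
  induction hu with
  | rule l r σ hm =>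
      obtain ⟨c, i, hi, hp⟩ := hm
      obtain ⟨rfl, -⟩ := Prod.ext_iff.mp hp
      rw [subst_appT, subst_fiT] at h
      exact absurd (h c i _ _ (.refl _)) (not_le.mpr hi)
  | congr f ts i u _ ih => exact ih (noURedex_of_subterm h (.arg f ts i))

theorem noURedex_app {f : USig C} {ts : Fin (uar f) → ATerm C} (hargs : ∀ i, NoURedex aa (ts i))
    (hroot : ∀ (c : C) (i : ℕ) (us : Fin (uar (some (c, i))) → ATerm C) (b : ATerm C),
      Term.app f ts = appT (.app (some (c, i)) us) b → aa c ≤ i) :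
    NoURedex aa (.app f ts) := by
  intro c i us b hsub
  rcases Subterm.eq_or_arg hsub with h | ⟨j, hj⟩
  · exact hroot c i us b h.symm
  · exact hargs j c i us b hj

theorem noURedex_appT {a b : ATerm C} (ha : NoURedex aa a) (hb : NoURedex aa b)
    (hroot : ∀ (c : C) (i : ℕ) (us : Fin (uar (some (c, i))) → ATerm C),
      a = .app (some (c, i)) us → aa c ≤ i) :
    NoURedex aa (appT a b) := by
  refine noURedex_app (fun i => ?_) fun c i us v h => hroot c i us (appT_inj h).1
  rcases uar_none_cases i with rfl | rfl
  · simpa [appT] using ha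
  · simpa [appT] using hb

theorem noURedex_uncurryApp {a b : ATerm C} (ha : NoURedex aa a) (hb : NoURedex aa b) :
    NoURedex aa (uncurryApp aa a b) := by
  by_cases hroot : ∀ c i (us : Fin (uar (some (c, i))) → ATerm C),
      a = .app (some (c, i)) us → aa c ≤ i
  · rw [uncurryApp_of_forall_ne hroot]
    exact noURedex_appT ha hb hroot
  · push Not at hroot
    obtain ⟨c, i, us, rfl, hi⟩ := hroot
    rw [uncurryApp_some, if_pos hi]
    refine noURedex_app (fun j => ?_) fun c' i' us' b' h => by cases h
    rcases snocArgs_cases us b j with h | ⟨k, h⟩ <;> rw [h]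
    · exact hb
    · exact noURedex_of_subterm ha (.arg _ us k)

theorem noURedex_uncurry (t : ATerm C) : NoURedex aa (uncurry aa t) := by
  induction t with
  | var x => intro c i us b hs; cases hs.eq_of_var
  | app f ts ih =>
      obtain _ | p := f
      · rw [uncurry_app_none]
        exact noURedex_uncurryApp (ih _) (ih _)
      · rw [uncurry_app_some]
        exact noURedex_app ih fun c i us b h => by cases h

theorem normTo_uncurry (t : ATerm C) : NormTo (USys aa) t (uncurry aa t) :=
  ⟨rstar_uncurry t, (noURedex_uncurry t).nf⟩

theorem uncurry_update {f : USig C} {ts : Fin (uar f) → ATerm C} {i : Fin (uar f)}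
    {u : ATerm C} (h : uncurry aa u = uncurry aa (ts i)) :
    uncurry aa (.app f (Function.update ts i u)) = uncurry aa (.app f ts) := by
  have key : ∀ j, uncurry aa (Function.update ts i u j) = uncurry aa (ts j) := by
    intro j
    by_cases hj : j = i
    · subst hj; rw [Function.update_self, h]
    · rw [Function.update_of_ne hj]
  obtain _ | p := f
  · rw [uncurry_app_none, uncurry_app_none, key, key]
  · simp only [uncurry_app_some, key]

theorem uncurry_eq_of_rew_usys {s t : ATerm C} (h : Rew (USys aa) s t) :
    uncurry aa s = uncurry aa t := by
  induction h with
  | rule l r σ hm =>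
      obtain ⟨c, i, hi, hp⟩ := hm
      obtain ⟨rfl, rfl⟩ := Prod.ext_iff.mp hp
      rw [subst_appT, subst_fiT, uncurry_appT, uncurry_app_some, Term.subst_var,
        uncurryApp_some, if_pos hi, subst_fiT, uncurry_app_some]
      exact congrArg _ (snocArgs_init_last fun j => uncurry aa (σ j))
  | congr f ts i u _ ih => exact (uncurry_update ih.symm).symm

theorem uncurry_eq_of_rstar_usys {s t : ATerm C} (h : RStar (USys aa) s t) :
    uncurry aa s = uncurry aa t := by
  induction h with
  | refl => rfl
  | tail _ h ih => exact ih.trans (uncurry_eq_of_rew_usys h)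

end Uncurrying

section EtaRules

variable {C : Type} {aa : C → ℕ} {R : Set (ATerm C × ATerm C)}

theorem headCount_appT (a b : ATerm C) :
    headCount (appT a b) = (headCount a).map fun p => (p.1, p.2 + 1) := by
  rw [appT, headCount]
  simp

theorem headCount_const (c : C) (ts : Fin (uar (some (c, 0))) → ATerm C) :
    headCount (.app (some (c, 0)) ts) = some (c, 0) := by
  rw [headCount]

theorem exists_headCount {t : ATerm C} (happ : ApplicativeT t) (hvf : HeadVarFree t)
    (hnv : ∀ x, t ≠ .var x) : ∃ c n, headCount t = some (c, n) := by
  induction t with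
  | var x => exact absurd rfl (hnv x)
  | app f ts ih =>
      obtain _ | ⟨c, i⟩ := f
      · obtain ⟨c, n, hc⟩ := ih _ (applicativeT_arg happ _) (headVarFree_arg hvf _)
          hvf.head_ne_var
        refine ⟨c, n + 1, ?_⟩
        rw [app_none_eq_appT ts, headCount_appT, hc]
        rfl
      · obtain rfl := happ.arity_eq_zero
        exact ⟨c, 0, headCount_const c ts⟩

theorem headVarFree_appT_var {l : ATerm C} (hl : HeadVarFree l) (hnv : ∀ y, l ≠ .var y) (x : ℕ) :
    HeadVarFree (appT l (.var x)) := by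
  intro u hu y v
  rcases Subterm.eq_or_arg hu with rfl | ⟨i, hi⟩
  · exact fun h => hnv y (appT_inj h).1
  · rcases uar_none_cases i with rfl | rfl
    · exact hl u (by simpa using hi) y v
    · rw [(by simpa using hi : Subterm u (.var x)).eq_of_var]
      exact (appT_ne_var _ _ x).symm

theorem Eta.lhs_spine (hR : IsATRS R) (hl : LHVF R) (haa : AASpec R aa)
    {p : ATerm C × ATerm C} (h : Eta aa R p) :
    HeadVarFree p.1 ∧ ApplicativeT p.1 ∧ ∃ c n, headCount p.1 = some (c, n) ∧ n ≤ aa c := by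
  induction h with
  | base p hp =>
      obtain ⟨hnv, -, happ, -⟩ := hR p hp
      obtain ⟨c, n, hc⟩ := exists_headCount happ (hl p hp) hnv
      exact ⟨hl p hp, happ, c, n, hc, (haa c).1 n ⟨p, hp, p.1, Or.inl (.refl _), hc⟩⟩
  | eta l r c n x _ hc hn _ _ ih =>
      obtain ⟨hvf, happ, -⟩ := ih
      have hnv : ∀ y, l ≠ .var y := fun y h => by rw [h] at hc; cases hc
      refine ⟨headVarFree_appT_var hvf hnv x, applicativeT_appT happ (applicativeT_var x),
        c, n + 1, ?_, hn⟩
      rw [headCount_appT, hc]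
      rfl

theorem uncurry_eq_app_of_headCount {t : ATerm C} (happ : ApplicativeT t) (hvf : HeadVarFree t)
    {c : C} {n : ℕ} (hc : headCount t = some (c, n)) (hn : n ≤ aa c) :
    ∃ us, uncurry aa t = .app (some (c, n)) us := by
  induction t generalizing n with
  | var x => cases hc
  | app f ts ih =>
      obtain _ | ⟨c', i⟩ := f
      · rw [app_none_eq_appT ts, headCount_appT] at hc
        obtain ⟨⟨c₀, n₀⟩, hc₀, he⟩ := Option.map_eq_some_iff.mp hc
        obtain ⟨rfl, rfl⟩ := Prod.ext_iff.mp he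
        obtain ⟨us, hus⟩ := ih _ (applicativeT_arg happ _) (headVarFree_arg hvf _) hc₀ (by omega)
        rw [uncurry_app_none, hus, uncurryApp_some, if_pos (by omega)]
        exact ⟨_, rfl⟩
      · obtain rfl := happ.arity_eq_zero
        rw [headCount_const] at hc
        obtain ⟨rfl, rfl⟩ := Prod.ext_iff.mp (Option.some_injective _ hc)
        rw [uncurry_app_some]
        exact ⟨_, rfl⟩

theorem Eta.exists_rew_etaDown_uncurry {l r : ATerm C} (hEta : Eta aa R (l, r))
    (hvf : HeadVarFree l) (σ : ℕ → ATerm C) :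
    ∃ b, Rew (EtaDown aa R) (uncurry aa (l.subst σ)) b ∧
      RStar (USys aa) b (uncurry aa (r.subst σ)) := by
  refine ⟨(uncurry aa r).subst fun x => uncurry aa (σ x), ?_, ?_⟩
  · rw [uncurry_subst hvf]
    exact .rule _ _ _ ⟨l, r, hEta, normTo_uncurry l, normTo_uncurry r⟩
  · have : RStar (USys aa) (r.subst σ) ((uncurry aa r).subst fun x => uncurry aa (σ x)) :=
      ((rstar_uncurry r).subst σ).trans (RStar.subst_of_forall (fun x => rstar_uncurry (σ x)) _)
    rw [uncurry_eq_of_rstar_usys this]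
    exact rstar_uncurry _

end EtaRules

section Simulation

variable {C : Type} {aa : C → ℕ} {E U R : Set (ATerm C × ATerm C)}

theorem app_none_update_left (ts : Fin (uar (none : USig C)) → ATerm C) (u : ATerm C) :
    Term.app none (Function.update ts ⟨0, by simp [uar]⟩ u) = appT u (ts ⟨1, by simp [uar]⟩) := by
  rw [app_none_eq_appT]
  simp [Fin.ext_iff]

theorem app_none_update_right (ts : Fin (uar (none : USig C)) → ATerm C) (u : ATerm C) :
    Term.app none (Function.update ts ⟨1, by simp [uar]⟩ u) = appT (ts ⟨0, by simp [uar]⟩) u := by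
  rw [app_none_eq_appT]
  simp [Fin.ext_iff]

theorem uncurry_foldl_appT (a : ATerm C) (ws : List (ATerm C)) :
    uncurry aa (ws.foldl appT a) = (ws.map (uncurry aa)).foldl (uncurryApp aa) (uncurry aa a) := by
  induction ws generalizing a with
  | nil => rfl
  | cons w ws ih => rw [List.foldl_cons, ih, uncurry_appT]; rfl

theorem foldl_uncurryApp_of_saturated {x : ATerm C} (hx : ∀ v, uncurryApp aa x v = appT x v)
    (V : List (ATerm C)) : V.foldl (uncurryApp aa) x = V.foldl appT x := by
  induction V generalizing x with
  | nil => rfl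
  | cons v V ih => rw [List.foldl_cons, List.foldl_cons, hx, ih fun _ => rfl]

/-- A relative step strictly below the root: unlike an arbitrary relative step, it survives
uncurrying an application of its source. -/
def ArgStep (E U : Set (ATerm C × ATerm C)) (s t : ATerm C) : Prop :=
  ∃ (f : USig C) (ts : Fin (uar f) → ATerm C) (i : Fin (uar f)) (b : ATerm C),
    s = .app f ts ∧ t = .app f (Function.update ts i b) ∧ RelStep E U (ts i) b

theorem ArgStep.of_update {f : USig C} {ts : Fin (uar f) → ATerm C} {i : Fin (uar f)}
    {b : ATerm C} (h : RelStep E U (ts i) b) :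
    ArgStep E U (.app f ts) (.app f (Function.update ts i b)) :=
  ⟨f, ts, i, b, rfl, rfl, h⟩

theorem ArgStep.relStep {s t : ATerm C} (h : ArgStep E U s t) : RelStep E U s t := by
  obtain ⟨f, ts, i, b, rfl, rfl, h⟩ := h
  exact h.update

theorem argStep_appT_left {a a' : ATerm C} (h : RelStep E U a a') (v : ATerm C) :
    ArgStep E U (appT a v) (appT a' v) :=
  appT_left_of_update (fun _ _ _ => ArgStep.of_update) v h

theorem argStep_appT_right (a : ATerm C) {b b' : ATerm C} (h : RelStep E U b b') :
    ArgStep E U (appT a b) (appT a b') :=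
  appT_right_of_update (fun _ _ _ => ArgStep.of_update) a h

theorem ArgStep.uncurryApp_left {s t : ATerm C} (h : ArgStep E U s t) (v : ATerm C) :
    ArgStep E U (uncurryApp aa s v) (uncurryApp aa t v) := by
  obtain ⟨f, ts, i, b, rfl, rfl, h⟩ := h
  obtain _ | ⟨c, j⟩ := f
  · exact argStep_appT_left (ArgStep.of_update h).relStep v
  · rw [uncurryApp_some, uncurryApp_some]
    split
    · rw [snocArgs_update]
      exact ArgStep.of_update (by rwa [snocArgs_castSucc])
    · exact argStep_appT_left (ArgStep.of_update h).relStep v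

theorem ArgStep.foldl_uncurryApp {s t : ATerm C} (h : ArgStep E U s t) (V : List (ATerm C)) :
    ArgStep E U (V.foldl (uncurryApp aa) s) (V.foldl (uncurryApp aa) t) := by
  induction V generalizing s t with
  | nil => exact h
  | cons v V ih => exact ih (h.uncurryApp_left v)

theorem argStep_uncurryApp_right (a : ATerm C) {b b' : ATerm C} (h : RelStep E U b b') :
    ArgStep E U (uncurryApp aa a b) (uncurryApp aa a b') := by
  rcases a with y | ⟨_ | ⟨c, i⟩, ts⟩
  · exact argStep_appT_right _ h
  · exact argStep_appT_right _ h
  · rw [uncurryApp_some, uncurryApp_some]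
    split
    · rw [← update_snocArgs_last ts b b']
      exact ArgStep.of_update (by rwa [snocArgs_last])
    · exact argStep_appT_right _ h

theorem subst_appT_var_update {l : ATerm C} {x : ℕ} (hx : ¬ Subterm (.var x) l)
    (σ : ℕ → ATerm C) (w : ATerm C) :
    (appT l (.var x)).subst (Function.update σ x w) = appT (l.subst σ) w := by
  rw [subst_appT, Term.subst_var, Function.update_self]
  congr 1
  exact Term.subst_congr fun y hy => Function.update_of_ne (by rintro rfl; exact hx hy) _ _

/-- Once the head of `s↓` is saturated, the further arguments stay outside the redex. -/
theorem relStep_uncurry_foldl_appT_of_saturated {s t b : ATerm C}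
    (hsb : Rew E (uncurry aa s) b) (hbt : RStar (USys aa) b (uncurry aa t))
    (hsat : ∀ v, uncurryApp aa (uncurry aa s) v = appT (uncurry aa s) v) (ws : List (ATerm C)) :
    RelStep E (USys aa) (uncurry aa (ws.foldl appT s)) (uncurry aa (ws.foldl appT t)) := by
  have hws : List.Forall₂ (RStar (USys aa)) ws (ws.map (uncurry aa)) :=
    List.forall₂_map_right_iff.mpr (List.forall₂_same.mpr fun w _ => rstar_uncurry w)
  have ht : uncurry aa (ws.foldl appT t) =
      uncurry aa ((ws.map (uncurry aa)).foldl appT (uncurry aa t)) :=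
    uncurry_eq_of_rstar_usys (RStar.foldl_appT (rstar_uncurry t) hws)
  rw [uncurry_foldl_appT, foldl_uncurryApp_of_saturated hsat, ht]
  refine ⟨_, _, .refl, Rew.foldl_appT _ hsb, ?_⟩
  exact (RStar.foldl_appT hbt (List.forall₂_same.mpr fun _ _ => .refl)).trans (rstar_uncurry _)

theorem Eta.relStep_uncurry_foldl_appT (hR : IsATRS R) (hl : LHVF R) (haa : AASpec R aa)
    {l r : ATerm C} (hEta : Eta aa R (l, r)) (σ : ℕ → ATerm C) (ws : List (ATerm C)) :
    RelStep (EtaDown aa R) (USys aa) (uncurry aa (ws.foldl appT (l.subst σ)))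
      (uncurry aa (ws.foldl appT (r.subst σ))) := by
  induction ws generalizing l r σ with
  | nil =>
      obtain ⟨hvf, -⟩ := hEta.lhs_spine hR hl haa
      obtain ⟨b, hb, hbr⟩ := hEta.exists_rew_etaDown_uncurry hvf σ
      exact ⟨_, b, .refl, hb, hbr⟩
  | cons w ws ih =>
      obtain ⟨hvf, happ, c, n, hc, hn⟩ := hEta.lhs_spine hR hl haa
      rcases hn.lt_or_eq with hlt | rfl
      · -- the head is not saturated: use the η-expanded rule, which consumes `w`
        obtain ⟨x, hxl, hxr⟩ := exists_fresh_var l r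
        have := ih (Eta.eta l r c n x hEta hc hlt hxl hxr) (Function.update σ x w)
        rwa [subst_appT_var_update hxl, subst_appT_var_update hxr] at this
      · obtain ⟨us, hus⟩ := uncurry_eq_app_of_headCount happ hvf hc le_rfl
        obtain ⟨b, hb, hbr⟩ := hEta.exists_rew_etaDown_uncurry hvf σ
        refine relStep_uncurry_foldl_appT_of_saturated hb hbr (fun v => ?_) _
        rw [uncurry_subst hvf, hus, Term.subst_app]
        exact uncurryApp_of_forall_ne (fun c' i us' h => by cases h; exact le_rfl) _

theorem Rew.relStep_uncurry_foldl_appT (hR : IsATRS R) (hl : LHVF R) (haa : AASpec R aa)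
    {s t : ATerm C} (h : Rew R s t) (ws : List (ATerm C)) :
    RelStep (EtaDown aa R) (USys aa) (uncurry aa (ws.foldl appT s))
      (uncurry aa (ws.foldl appT t)) := by
  induction h generalizing ws with
  | rule l r σ hm => exact (Eta.base _ hm).relStep_uncurry_foldl_appT hR hl haa σ ws
  | congr f ts i u _ ih =>
      obtain _ | ⟨c, j⟩ := f
      · rcases uar_none_cases i with rfl | rfl
        · rw [app_none_update_left, app_none_eq_appT]
          exact ih (ts ⟨1, by simp [uar]⟩ :: ws)
        · rw [app_none_update_right, app_none_eq_appT, uncurry_foldl_appT, uncurry_foldl_appT,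
            uncurry_appT, uncurry_appT]
          exact (ArgStep.foldl_uncurryApp (argStep_uncurryApp_right _ (ih [])) _).relStep
      · rw [uncurry_foldl_appT, uncurry_foldl_appT, uncurry_app_some, uncurry_app_some,
          ← Function.comp_def (uncurry aa) (Function.update ts i u), Function.comp_update]
        exact (ArgStep.foldl_uncurryApp (ArgStep.of_update (ih [])) _).relStep

end Simulation

section Heights

variable {C : Type} {aa : C → ℕ} {R : Set (ATerm C × ATerm C)}

theorem rstar_foldl_appT_constT (c : C) :
    ∀ (i : ℕ), i ≤ aa c → ∀ ts : Fin i → ATerm C,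
      RStar (USys aa) ((List.ofFn ts).foldl appT (constT c)) (.app (some (c, i)) ts)
  | 0, _, ts => by
      rw [List.ofFn_zero, List.foldl_nil,
        show Term.app (some (c, 0)) ts = constT c from constT_eq ts]
      exact .refl
  | i + 1, hi, ts => by
      rw [List.ofFn_succ', List.concat_eq_append, List.foldl_concat]
      have hlast : uncurryApp aa (.app (some (c, i)) fun j => ts j.castSucc) (ts (Fin.last i)) =
          .app (some (c, i + 1)) ts :=
        (uncurryApp_some c i _ _).trans ((if_pos (by omega)).trans
          (congrArg _ (snocArgs_init_last ts)))
      rw [← hlast]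
      exact ((rstar_foldl_appT_constT c i (by omega) _).appT_congr .refl).trans
        (rstar_appT_uncurryApp _ _)

theorem rstar_usys_curryId {t : ATerm C} (h : GoodTerm aa t) : RStar (USys aa) (curryId t) t := by
  induction t with
  | var x => exact .refl
  | app f ts ih =>
      obtain _ | ⟨c, i⟩ := f
      · rw [curryId_app_none, app_none_eq_appT ts]
        exact (ih _ (goodTerm_arg h _)).appT_congr (ih _ (goodTerm_arg h _))
      · rw [curryId_app_some, show (List.ofFn fun j => curryId (ts j)) = (List.ofFn ts).map curryId
          by rw [List.map_ofFn]; rfl]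
        refine (RStar.foldl_appT .refl ?_).trans
          (rstar_foldl_appT_constT c i (h _ _ ts (.refl _) rfl) ts)
        exact List.forall₂_map_left_iff.mpr
          (List.forall₂_same.mpr fun u hu => by
            obtain ⟨j, rfl⟩ := List.mem_ofFn.mp hu
            exact ih j (goodTerm_arg h j))

theorem dh_relStep_eq_dh_curryId (hR : IsATRS R) (hl : LHVF R) (haa : AASpec R aa)
    {t : ATerm C} (hg : GoodTerm aa t) :
    dh (RelStep (EtaDown aa R) (USys aa)) t = dh (Rew R) (curryId t) := by
  refine dh_congr fun m => ⟨fun ⟨u, hu⟩ => ⟨curryId u, hu.map curryId fun _ _ h => h.curryId hR⟩,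
    fun ⟨u, hu⟩ => ?_⟩
  have hsim := hu.map (uncurry aa) fun _ _ h => h.relStep_uncurry_foldl_appT hR hl haa []
  rw [uncurry_eq_of_rstar_usys (rstar_usys_curryId hg)] at hsim
  exact RelPow.relStep_of_rstar_left (rstar_uncurry t) hsim

end Heights

section Renaming

variable {C : Type}

def symbols : ATerm C → List (ℕ ⊕ C)
  | .var x => [.inl x]
  | .app f ts => (f.map fun p => .inr p.1).toList ++ (List.ofFn fun j => symbols (ts j)).flatten

def SymbolsIn (L : List (ℕ ⊕ C)) (t : ATerm C) : Prop :=
  (∀ x, Subterm (.var x) t → .inl x ∈ L) ∧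
    ∀ c i (ts : Fin (uar (some (c, i))) → ATerm C), Subterm (.app (some (c, i)) ts) t → .inr c ∈ L

def ConstsIn (K : Set C) (t : ATerm C) : Prop :=
  ∀ c i (ts : Fin (uar (some (c, i))) → ATerm C), Subterm (.app (some (c, i)) ts) t → c ∈ K

theorem symbolsIn_symbols (t : ATerm C) : SymbolsIn (symbols t) t := by
  induction t with
  | var y =>
      refine ⟨fun x h => ?_, fun c i ts h => by cases h.eq_of_var⟩
      cases h.eq_of_var
      simp [symbols]
  | app f ts ih =>
      have harg : ∀ j a, a ∈ symbols (ts j) → a ∈ symbols (.app f ts) := fun j a ha => by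
        rw [symbols]
        exact List.mem_append_right _ (List.mem_flatten.mpr ⟨_, List.mem_ofFn.mpr ⟨j, rfl⟩, ha⟩)
      refine ⟨fun x h => ?_, fun c i us h => ?_⟩
      · rcases h.eq_or_arg with h | ⟨j, hj⟩
        · cases h
        · exact harg j _ ((ih j).1 x hj)
      · rcases h.eq_or_arg with h | ⟨j, hj⟩
        · cases h
          simp [symbols]
        · exact harg j _ ((ih j).2 c i us hj)

theorem SymbolsIn.arg {L : List (ℕ ⊕ C)} {f : USig C} {ts : Fin (uar f) → ATerm C}
    (h : SymbolsIn L (.app f ts)) (i : Fin (uar f)) : SymbolsIn L (ts i) :=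
  ⟨fun x hx => h.1 x (hx.trans (.arg f ts i)), fun c k us hs => h.2 c k us (hs.trans (.arg f ts i))⟩

theorem constsIn_arg {K : Set C} {f : USig C} {ts : Fin (uar f) → ATerm C}
    (h : ConstsIn K (.app f ts)) (i : Fin (uar f)) : ConstsIn K (ts i) :=
  fun c k us hs => h c k us (hs.trans (.arg f ts i))

theorem length_symbols_le (t : ATerm C) : (symbols t).length ≤ t.size := by
  induction t with
  | var x => simp [symbols, Term.size]
  | app f ts ih =>
      rw [symbols, List.length_append, List.length_flatten, List.map_ofFn, List.sum_ofFn]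
      have : (f.map fun p => (Sum.inr p.1 : ℕ ⊕ C)).toList.length ≤ 1 := by cases f <;> simp
      change _ ≤ 1 + ∑ j, (ts j).size
      have := Finset.sum_le_sum fun j (_ : j ∈ Finset.univ) => ih j
      simp only [Function.comp_apply]
      omega

theorem finite_consts (t : ATerm C) : {c | Sum.inr c ∈ symbols t}.Finite :=
  (List.finite_toSet (symbols t)).preimage Sum.inr_injective.injOn

theorem exists_finite_constsIn {R : Set (ATerm C × ATerm C)} (hfin : R.Finite) :
    ∃ K : Set C, K.Finite ∧ ∀ p ∈ R, ConstsIn K p.1 ∧ ConstsIn K p.2 :=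
  ⟨⋃ p ∈ R, {c | Sum.inr c ∈ symbols p.1} ∪ {c | Sum.inr c ∈ symbols p.2},
    hfin.biUnion fun p _ => (finite_consts p.1).union (finite_consts p.2),
    fun p hp => ⟨fun c i ts h => Set.mem_biUnion hp (Or.inl ((symbolsIn_symbols p.1).2 c i ts h)),
      fun c i ts h => Set.mem_biUnion hp (Or.inr ((symbolsIn_symbols p.2).2 c i ts h))⟩⟩

/-- Variables and constants outside `K` become variables numbered by their position in `L`.
Symbols `c_i` with `i ≠ 0` are kept, so that renaming commutes with contexts. -/
def canonize [DecidableEq C] (K : Set C) [DecidablePred (· ∈ K)] (L : List (ℕ ⊕ C)) :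
    ATerm C → ATerm C
  | .var x => .var (L.findIdx (· = .inl x))
  | .app none ts => .app none fun j => canonize K L (ts j)
  | .app (some (c, i)) ts =>
      if c ∈ K ∨ i ≠ 0 then .app (some (c, i)) fun j => canonize K L (ts j)
      else .var (L.findIdx (· = .inr c))

def decodeSymbol (L : List (ℕ ⊕ C)) (k : ℕ) : ATerm C :=
  match L[k]? with
  | some (.inl x) => .var x
  | some (.inr c) => constT c
  | none => .var 0

inductive CanonicalShape (K : Set C) (v : ℕ) : ATerm C → Prop
  | var {x : ℕ} : x < v → CanonicalShape K v (.var x)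
  | const {c : C} : c ∈ K → CanonicalShape K v (constT c)
  | appT {a b : ATerm C} : CanonicalShape K v a → CanonicalShape K v b →
      CanonicalShape K v (appT a b)

theorem CanonicalShape.mono {K : Set C} {v v' : ℕ} (hv : v ≤ v') {t : ATerm C}
    (h : CanonicalShape K v t) : CanonicalShape K v' t := by
  induction h with
  | var hx => exact .var (hx.trans_le hv)
  | const hc => exact .const hc
  | appT _ _ iha ihb => exact .appT iha ihb

theorem finite_canonicalShape {K : Set C} (hK : K.Finite) (v : ℕ) :
    ∀ s : ℕ, {t : ATerm C | CanonicalShape K v t ∧ t.size ≤ s}.Finite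
  | 0 => Set.finite_empty.subset fun t ⟨_, hs⟩ => absurd hs (by have := Term.size_pos t; omega)
  | s + 1 => by
      refine ((((Set.finite_Iio v).image Term.var).union (hK.image constT)).union
        (((finite_canonicalShape hK v s).prod (finite_canonicalShape hK v s)).image
          fun p => appT p.1 p.2)).subset ?_
      rintro t ⟨ht, hs⟩
      cases ht with
      | var hx => exact Or.inl (Or.inl ⟨_, hx, rfl⟩)
      | const hc => exact Or.inl (Or.inr ⟨_, hc, rfl⟩)
      | appT ha hb =>
          rw [size_appT] at hs
          exact Or.inr ⟨(_, _), ⟨⟨ha, by dsimp only; omega⟩, ⟨hb, by dsimp only; omega⟩⟩, rfl⟩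

variable [DecidableEq C] {K : Set C} [DecidablePred (· ∈ K)] {L : List (ℕ ⊕ C)}

theorem canonize_app_of_mem {c : C} {i : ℕ} (hc : c ∈ K ∨ i ≠ 0)
    (ts : Fin (uar (some (c, i))) → ATerm C) :
    canonize K L (.app (some (c, i)) ts) = .app (some (c, i)) fun j => canonize K L (ts j) := by
  rw [canonize, if_pos hc]

theorem canonize_subst {l : ATerm C} (hl : ConstsIn K l) (σ : ℕ → ATerm C) :
    canonize K L (l.subst σ) = l.subst fun x => canonize K L (σ x) := by
  induction l with
  | var x => rfl
  | app f ts ih =>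
      obtain _ | ⟨c, i⟩ := f
      · simp only [Term.subst_app, canonize, ih _ (constsIn_arg hl _)]
      · simp only [Term.subst_app, canonize_app_of_mem (Or.inl (hl c i ts (.refl _))),
          ih _ (constsIn_arg hl _)]

theorem Rew.canonize {R : Set (ATerm C × ATerm C)} (hRK : ∀ p ∈ R, ConstsIn K p.1 ∧ ConstsIn K p.2)
    {s t : ATerm C} (h : Rew R s t) : Rew R (_root_.canonize K L s) (_root_.canonize K L t) := by
  induction h with
  | rule l r σ hm =>
      rw [canonize_subst (hRK _ hm).1, canonize_subst (hRK _ hm).2]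
      exact .rule l r _ hm
  | congr f ts i u _ ih =>
      have key : (fun j => _root_.canonize K L (Function.update ts i u j)) =
          Function.update (fun j => _root_.canonize K L (ts j)) i (_root_.canonize K L u) :=
        funext fun j => Function.apply_update (fun _ => _root_.canonize K L) ts i u j
      obtain _ | ⟨c, k⟩ := f
      · simp only [_root_.canonize, key]
        exact .congr _ _ i _ ih
      · by_cases hc : c ∈ K ∨ k ≠ 0
        · rw [canonize_app_of_mem hc, canonize_app_of_mem hc, key]
          exact .congr _ _ i _ ih
        · obtain rfl : k = 0 := by tauto
          exact absurd i.isLt (by simp [uar])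

theorem canonize_subst_decodeSymbol {t : ATerm C} (ht : SymbolsIn L t) :
    (canonize K L t).subst (decodeSymbol L) = t := by
  induction t with
  | var x => simp [canonize, decodeSymbol, List.getElem?_findIdx_eq (ht.1 x (.refl _))]
  | app f ts ih =>
      obtain _ | ⟨c, i⟩ := f
      · simp only [canonize, Term.subst_app, ih _ (ht.arg _)]
      · by_cases hc : c ∈ K ∨ i ≠ 0
        · simp only [canonize_app_of_mem hc, Term.subst_app, ih _ (ht.arg _)]
        · obtain rfl : i = 0 := by tauto
          rw [canonize, if_neg hc, Term.subst_var, decodeSymbol,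
            List.getElem?_findIdx_eq (ht.2 c 0 ts (.refl _)), constT_eq]

theorem canonicalShape_canonize {t : ATerm C} (happ : ApplicativeT t) (ht : SymbolsIn L t) :
    CanonicalShape K L.length (canonize K L t) := by
  induction t with
  | var x => exact .var (List.findIdx_eq_lt_length_of_mem (ht.1 x (.refl _)))
  | app f ts ih =>
      obtain _ | ⟨c, i⟩ := f
      · rw [canonize, app_none_eq_appT]
        exact .appT (ih _ (applicativeT_arg happ _) (ht.arg _))
          (ih _ (applicativeT_arg happ _) (ht.arg _))
      · obtain rfl := happ.arity_eq_zero
        by_cases hc : c ∈ K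
        · rw [canonize_app_of_mem (Or.inl hc), constT_eq]
          exact .const hc
        · rw [canonize, if_neg (by simpa using hc)]
          exact .var (List.findIdx_eq_lt_length_of_mem (ht.2 c 0 ts (.refl _)))

theorem size_canonize_le (t : ATerm C) : (canonize K L t).size ≤ t.size := by
  induction t with
  | var x => exact le_rfl
  | app f ts ih =>
      have hsum := Finset.sum_le_sum fun j (_ : j ∈ Finset.univ) => ih j
      obtain _ | ⟨c, i⟩ := f
      · change 1 + ∑ j, (canonize K L (ts j)).size ≤ 1 + ∑ j, (ts j).size
        omega
      · by_cases hc : c ∈ K ∨ i ≠ 0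
        · rw [canonize_app_of_mem hc]
          change 1 + ∑ j, (canonize K L (ts j)).size ≤ 1 + ∑ j, (ts j).size
          omega
        · rw [canonize, if_neg hc]
          exact Term.size_pos _

theorem dh_canonize {R : Set (ATerm C × ATerm C)}
    (hRK : ∀ p ∈ R, ConstsIn K p.1 ∧ ConstsIn K p.2) {t : ATerm C} (ht : SymbolsIn L t) :
    dh (Rew R) (canonize K L t) = dh (Rew R) t := by
  refine dh_congr fun m => ⟨fun ⟨u, hu⟩ => ⟨u.subst (decodeSymbol L), ?_⟩,
    fun ⟨u, hu⟩ => ⟨canonize K L u, hu.map _ fun _ _ h => h.canonize hRK⟩⟩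
  have := hu.map (Term.subst (decodeSymbol L)) fun _ _ h => h.subst _
  rwa [canonize_subst_decodeSymbol ht] at this

end Renaming

theorem bddAbove_dh {C : Type} {R : Set (ATerm C × ATerm C)} (hfin : R.Finite) (n : ℕ) :
    BddAbove {m | ∃ t : ATerm C, ApplicativeT t ∧ t.size ≤ n ∧ m = dh (Rew R) t} := by
  classical
  obtain ⟨K, hK, hRK⟩ := exists_finite_constsIn hfin
  refine ((finite_canonicalShape hK n n).image (dh (Rew R))).bddAbove.mono ?_
  rintro m ⟨t, happ, hsize, rfl⟩
  exact ⟨canonize K (symbols t) t,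
    ⟨(canonicalShape_canonize happ (symbolsIn_symbols t)).mono ((length_symbols_le t).trans hsize),
      (size_canonize_le t).trans hsize⟩,
    dh_canonize hRK (symbolsIn_symbols t)⟩

theorem dc_preserve_general {C : Type} (R : Set (ATerm C × ATerm C)) (aa : C → ℕ)
    (hR : IsATRS R) (hl : LHVF R) (haa : AASpec R aa)
    (hfin : R.Finite) (k : ℕ)
    (hdc : BigO (dcOn (Rew R) ApplicativeT) (fun n => n ^ k)) :
    (∀ n, dcOn (RelStep (EtaDown aa R) (USys aa)) (GoodTerm aa) n ≤
      dcOn (Rew R) ApplicativeT (2 * n)) ∧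
    BigO (dcOn (RelStep (EtaDown aa R) (USys aa)) (GoodTerm aa)) (fun n => n ^ k) := by
  have hle : ∀ n, dcOn (RelStep (EtaDown aa R) (USys aa)) (GoodTerm aa) n ≤
      dcOn (Rew R) ApplicativeT (2 * n) := by
    intro n
    refine csSup_le_csSup' (bddAbove_dh hfin (2 * n)) ?_
    rintro m ⟨t, hg, hsize, rfl⟩
    exact ⟨curryId t, applicativeT_curryId t, by have := size_curryId_lt t; omega,
      dh_relStep_eq_dh_curryId hR hl haa hg⟩
  obtain ⟨M, N, hMN⟩ := hdc
  refine ⟨hle, M * 2 ^ k, N, fun n => (hle n).trans ((hMN (2 * n)).trans_eq ?_)⟩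
  simp only [mul_pow, mul_assoc]

/-- if `R` is a non-empty ATRS with `dc_R(n) ∈ O(n^k)` then
`dc_{R_η↓/U}(n) ≤ dc_R(2n)` for all `n`, and `dc_{R_η↓/U}(n) ∈ O(n^k)`. -/
theorem dc_preserve {C : Type} (R : Set (ATerm C × ATerm C)) (aa : C → ℕ)
    (hR : IsATRS R) (hl : LHVF R) (haa : AASpec R aa)
    (hne : R.Nonempty) (hfin : R.Finite) (k : ℕ)
    (hdc : BigO (dcOn (Rew R) ApplicativeT) (fun n => n ^ k)) :
    (∀ n, dcOn (RelStep (EtaDown aa R) (USys aa)) (GoodTerm aa) n ≤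
      dcOn (Rew R) ApplicativeT (2 * n)) ∧
    BigO (dcOn (RelStep (EtaDown aa R) (USys aa)) (GoodTerm aa)) (fun n => n ^ k) :=
  dc_preserve_general R aa hR hl haa hfin k hdc
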